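/- arXiv:2006.15642 — 3 statements merged into one kernel-verified Lean document; each statement's English description precedes it below -/
import Mathlib

section
/- Let m ≥ 2 and let T ∈ B(H) be an m-isometry. Then T satisfies the (m-1)-kernel condition if and only if T satisfies the k-kernel condition for every k ∈ ℕ. -/
open ContinuousLinearMap MeasureTheory

noncomputable section

variable {H : Type*} [NormedAddCommGroup H] [InnerProductSpace ℂ H] [CompleteSpace H]

/-- `T^{[k]} = (T*)^k T^k`. -/
def opBr (T : H →L[ℂ] H) (k : ℕ) : H →L[ℂ] H :=
  ((ContinuousLinearMap.adjoint T) ^ k).comp (T ^ k)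

/-- `T` is an `m`-isometry: `∑_{p=0}^m (-1)^p (m choose p) T^{[p]} = 0`. -/
def IsMIsometry (T : H →L[ℂ] H) (m : ℕ) : Prop :=
  ∑ p ∈ Finset.range (m + 1), ((-1 : ℂ) ^ p * (m.choose p : ℂ)) • opBr T p = 0

/-- `T` satisfies the `k`-kernel condition: `Ker T*` is invariant under `T^{[n]}`
for every `n ∈ {1, …, k}`. -/
def KernelCondition (T : H →L[ℂ] H) (k : ℕ) : Prop :=
  ∀ n, 1 ≤ n → n ≤ k →
    ∀ x ∈ LinearMap.ker (ContinuousLinearMap.adjoint T : H →ₗ[ℂ] H),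
      opBr T n x ∈ LinearMap.ker (ContinuousLinearMap.adjoint T : H →ₗ[ℂ] H)

/-! The `T^{[n]} x` obey the linear recurrence with characteristic polynomial `(1 - X)^m`
(multiply the defining identity of an `m`-isometry by `(T*)^n` on the left and `T^n` on the
right). Its leading coefficient is `±1`, so every term is a combination of the `m` previous ones,
and a subspace containing `T^{[0]} x, …, T^{[m-1]} x` contains all of them. -/

theorem Submodule.forall_mem_of_sum_smul_add_eq_zero {K M : Type*} [DivisionRing K]
    [AddCommGroup M] [Module K M] (S : Submodule K M) {f : ℕ → M} {m : ℕ} {c : ℕ → K}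
    (hc : c m ≠ 0) (hrec : ∀ n, ∑ p ∈ Finset.range (m + 1), c p • f (p + n) = 0)
    (hinit : ∀ n < m, f n ∈ S) (n : ℕ) : f n ∈ S := by
  induction n using Nat.strong_induction_on with
  | _ n ih =>
    obtain hn | hn := Nat.lt_or_ge n m
    · exact hinit n hn
    obtain ⟨j, rfl⟩ := Nat.exists_eq_add_of_le hn
    have hlead : c m • f (m + j) = -∑ p ∈ Finset.range m, c p • f (p + j) := by
      rw [eq_neg_iff_add_eq_zero, add_comm, ← Finset.sum_range_succ]
      exact hrec j
    rw [← S.smul_mem_iff hc, hlead]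
    exact S.neg_mem <| S.sum_mem fun p hp => S.smul_mem _ <| ih _ (by simp at hp; omega)

theorem opBr_zero (T : H →L[ℂ] H) : opBr T 0 = 1 := by
  rw [opBr, pow_zero, pow_zero]
  rfl

theorem opBr_add (T : H →L[ℂ] H) (p n : ℕ) :
    opBr T (p + n) = (adjoint T) ^ n * opBr T p * T ^ n := by
  rw [opBr, opBr, ← mul_def, ← mul_def, pow_add, pow_add, pow_mul_comm, mul_assoc, mul_assoc,
    mul_assoc]

theorem IsMIsometry.sum_smul_opBr_add {T : H →L[ℂ] H} {m : ℕ} (hT : IsMIsometry T m) (n : ℕ) :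
    ∑ p ∈ Finset.range (m + 1), ((-1 : ℂ) ^ p * (m.choose p : ℂ)) • opBr T (p + n) = 0 := by
  calc _ = adjoint T ^ n *
        (∑ p ∈ Finset.range (m + 1), ((-1 : ℂ) ^ p * (m.choose p : ℂ)) • opBr T p) * T ^ n := by
        simp only [opBr_add, Finset.mul_sum, Finset.sum_mul, mul_smul_comm, smul_mul_assoc]
    _ = 0 := by rw [hT, mul_zero, zero_mul]

theorem mIsometry_kernelCondition_iff_forall_general (T : H →L[ℂ] H) (m : ℕ)
    (hT : IsMIsometry T m) :
    KernelCondition T (m - 1) ↔ ∀ k : ℕ, 1 ≤ k → KernelCondition T k := by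
  refine ⟨fun hker k _ n _ _ x hx => ?_, fun h n hn _ => h n hn n hn le_rfl⟩
  refine (LinearMap.ker (adjoint T : H →ₗ[ℂ] H)).forall_mem_of_sum_smul_add_eq_zero
    (f := fun n => opBr T n x) (m := m) (c := fun p => (-1 : ℂ) ^ p * (m.choose p : ℂ))
    (by simp) (fun j => ?_) (fun n hn => ?_) n
  · simpa using congrArg (· x) (hT.sum_smul_opBr_add j)
  · rcases n with _ | n
    · simpa [opBr_zero] using hx
    · exact hker (n + 1) (by omega) (by omega) x hx

/-- Lemma 2.1. If `m ≥ 2` and `T` is an `m`-isometry, then `T` satisfies the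
`(m-1)`-kernel condition iff it satisfies the `k`-kernel condition for every `k ∈ ℕ`. -/
theorem mIsometry_kernelCondition_iff_forall (T : H →L[ℂ] H) (m : ℕ) (hm : 2 ≤ m)
    (hT : IsMIsometry T m) :
    KernelCondition T (m - 1) ↔ ∀ k : ℕ, 1 ≤ k → KernelCondition T k :=
  mIsometry_kernelCondition_iff_forall_general T m hT
end
end

section
/- Let m ≥ 2 and let T ∈ B(H) be an m-isometry satisfying the k-kernel condition for every k ∈ ℕ. Then the subspaces T^p(Ker(T*)) and T^q(Ker(T*)) are orthogonal for all p, q ∈ ℤ_+ with p ≠ q. -/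
/-! For `q < p`, `⟪T^p a, T^q b⟫ = ⟪a, (T*)^(p-q) T^{[q]} b⟫`, and for `b ∈ Ker T*` the kernel
condition puts `T^{[q]} b` in `Ker T*`, so the right-hand side vanishes. -/

open ContinuousLinearMap MeasureTheory

noncomputable section

variable {H : Type*} [NormedAddCommGroup H] [InnerProductSpace ℂ H] [CompleteSpace H]

theorem ContinuousLinearMap.adjoint_pow (T : H →L[ℂ] H) (n : ℕ) :
    adjoint (T ^ n) = adjoint T ^ n := by
  simp only [← star_eq_adjoint, star_pow]

theorem adjoint_opBr_apply_eq_zero {T : H →L[ℂ] H} (hkc : ∀ k : ℕ, 1 ≤ k → KernelCondition T k)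
    (n : ℕ) {b : H} (hb : adjoint T b = 0) : adjoint T (opBr T n b) = 0 := by
  rcases Nat.eq_zero_or_pos n with rfl | hn
  · simpa [opBr] using hb
  · exact hkc n hn n hn le_rfl b hb

theorem adjoint_pow_apply_pow_apply_eq_zero {T : H →L[ℂ] H} {p q : ℕ} (hqp : q < p) {b : H}
    (hb : adjoint T (opBr T q b) = 0) : (adjoint T ^ p) ((T ^ q) b) = 0 := by
  obtain ⟨r, rfl⟩ : ∃ r, p = r + 1 + q := ⟨p - q - 1, by omega⟩
  rw [pow_add, pow_succ]
  change (adjoint T ^ r) (adjoint T (opBr T q b)) = 0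
  rw [hb, map_zero]

theorem inner_pow_apply_pow_apply_eq_zero {T : H →L[ℂ] H} {p q : ℕ} (hqp : q < p) (a : H)
    {b : H} (hb : adjoint T (opBr T q b) = 0) : inner ℂ ((T ^ p) a) ((T ^ q) b) = 0 := by
  rw [← adjoint_inner_right, adjoint_pow, adjoint_pow_apply_pow_apply_eq_zero hqp hb,
    inner_zero_right]

theorem mIsometry_images_ker_pairwise_orthogonal_general (T : H →L[ℂ] H)
    (hkc : ∀ k : ℕ, 1 ≤ k → KernelCondition T k) :
    ∀ p q : ℕ, p ≠ q →
      ∀ x ∈ (LinearMap.ker (ContinuousLinearMap.adjoint T : H →ₗ[ℂ] H)).map ((T ^ p : H →L[ℂ] H) : H →ₗ[ℂ] H),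
        ∀ y ∈ (LinearMap.ker (ContinuousLinearMap.adjoint T : H →ₗ[ℂ] H)).map ((T ^ q : H →L[ℂ] H) : H →ₗ[ℂ] H),
          (inner ℂ x y : ℂ) = 0 := by
  rintro p q hpq _ ⟨a, ha, rfl⟩ _ ⟨b, hb, rfl⟩
  rcases hpq.lt_or_gt with hpq | hqp
  · rw [← inner_conj_symm, coe_coe, coe_coe,
      inner_pow_apply_pow_apply_eq_zero hpq b (adjoint_opBr_apply_eq_zero hkc p ha), map_zero]
  · exact inner_pow_apply_pow_apply_eq_zero hqp a (adjoint_opBr_apply_eq_zero hkc q hb)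

/-- If `m ≥ 2` and `T` is an `m`-isometry satisfying the `k`-kernel condition
for every `k ∈ ℕ`, then the subspaces `T^p(Ker T*)` and `T^q(Ker T*)` are orthogonal for
`p ≠ q`. -/
theorem mIsometry_images_ker_pairwise_orthogonal (T : H →L[ℂ] H) (m : ℕ) (hm : 2 ≤ m)
    (hT : IsMIsometry T m) (hkc : ∀ k : ℕ, 1 ≤ k → KernelCondition T k) :
    ∀ p q : ℕ, p ≠ q →
      ∀ x ∈ (LinearMap.ker (ContinuousLinearMap.adjoint T : H →ₗ[ℂ] H)).map ((T ^ p : H →L[ℂ] H) : H →ₗ[ℂ] H),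
        ∀ y ∈ (LinearMap.ker (ContinuousLinearMap.adjoint T : H →ₗ[ℂ] H)).map ((T ^ q : H →L[ℂ] H) : H →ₗ[ℂ] H),
          (inner ℂ x y : ℂ) = 0 :=
  mIsometry_images_ker_pairwise_orthogonal_general T hkc
end
end

section
/- Let η ∈ ℕ ∪ {∞} and let (X, A, μ) be a discrete measure space with X = {x_1} ∪ {x_{i,j} : 1 ≤ i ≤ η, j ∈ ℕ} (all elements distinct), and let φ : X → X be given by φ(x_{i,j}) = x_{i,j-1} for j ≥ 2, φ(x_{i,1}) = x_1 for all 1 ≤ i ≤ η, and φ(x_1) = x_1. Suppose the composition operator C_φ on L²(μ) is bounded and is an m-isometry for some m ≥ 2. Then C_φ is not unitarily equivalent to any unilateral operator valued weighted shift. -/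
/-!
A unilateral operator valued weighted shift `S` with invertible weights satisfies the kernel
condition: `ker S*` is the zeroth summand of `ℓ²(K)`, and `S*ⁿSⁿ` maps it into itself. The kernel
condition is invariant under unitary equivalence, so it would have to hold for `C_φ`.

For the composition operator let `F_p = φ^{-p}{x₁}` and `E = φ⁻¹{x₁} \ {x₁}`, which contains
`x_{i,1} = e i 0`. The vector `μ(E) χ_{x₁} - μ{x₁} χ_E` lies in `ker C_φ*`, and the kernel condition
tested against `C_φ^{p+1} χ_{x₁} = χ_{F_{p+1}}` gives `μ{x₁} μ(F_{p+1}) = (μ{x₁} + μ(E)) μ(F_p)`.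
So `‖C_φ^p χ_{x₁}‖² = μ(F_p) = μ{x₁} r^p` with `r > 1`, whereas for an `m`-isometry `T` one has
`∑_p (-1)^p (m choose p) ‖T^p x‖² = 0`, which here reads `μ{x₁} (1 - r)^m = 0`.
-/

open ContinuousLinearMap MeasureTheory

noncomputable section

variable {H : Type*} [NormedAddCommGroup H] [InnerProductSpace ℂ H] [CompleteSpace H]

/-- `Sh` is the unilateral operator valued weighted shift on `ℓ²(K)` with weights `S n`, i.e.
`Sh e_n(f) = e_{n+1}(S_n f)`. -/
def IsWeightedShiftOf {K : Type*} [NormedAddCommGroup K] [InnerProductSpace ℂ K]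
    (Sh : lp (fun _ : ℕ => K) 2 →L[ℂ] lp (fun _ : ℕ => K) 2) (S : ℕ → K →L[ℂ] K) : Prop :=
  ∀ (n : ℕ) (f : K), Sh (lp.single 2 n f) = lp.single 2 (n + 1) (S n f)

open scoped InnerProductSpace

theorem inner_opBr_right (T : H →L[ℂ] H) (n : ℕ) (x y : H) :
    ⟪x, opBr T n y⟫_ℂ = ⟪(T ^ n) x, (T ^ n) y⟫_ℂ := by
  rw [opBr, comp_apply, ← star_eq_adjoint, ← star_pow, star_eq_adjoint, adjoint_inner_right]

theorem inner_opBr_left (T : H →L[ℂ] H) (n : ℕ) (x y : H) :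
    ⟪opBr T n x, y⟫_ℂ = ⟪(T ^ n) x, (T ^ n) y⟫_ℂ := by
  rw [← inner_conj_symm, inner_opBr_right, inner_conj_symm]

theorem IsMIsometry.sum_norm_sq_eq_zero {T : H →L[ℂ] H} {m : ℕ} (h : IsMIsometry T m) (x : H) :
    ∑ p ∈ Finset.range (m + 1), (-1 : ℝ) ^ p * m.choose p * ‖(T ^ p) x‖ ^ 2 = 0 := by
  have := congrArg (fun A : H →L[ℂ] H => ⟪x, A x⟫_ℂ) h
  simp only [sum_apply, smul_apply, inner_sum, inner_smul_right, inner_opBr_right,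
    inner_self_eq_norm_sq_to_K, zero_apply, inner_zero_right] at this
  apply Complex.ofReal_injective
  push_cast
  simpa using this

theorem IsMIsometry.not_forall_norm_sq_eq_geometric {T : H →L[ℂ] H} {m : ℕ} (h : IsMIsometry T m)
    (x : H) {a r : ℝ} (ha : a ≠ 0) (hr : r ≠ 1) :
    ¬ ∀ p ≤ m, ‖(T ^ p) x‖ ^ 2 = a * r ^ p := by
  intro hx
  have hsum := h.sum_norm_sq_eq_zero x
  rw [Finset.sum_congr rfl fun p hp => by
    rw [hx p (Nat.lt_succ_iff.1 (Finset.mem_range.1 hp))]] at hsum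
  have hbinom : ∑ p ∈ Finset.range (m + 1), (-1 : ℝ) ^ p * m.choose p * (a * r ^ p)
      = a * (1 - r) ^ m := by
    rw [sub_eq_neg_add, add_pow, Finset.mul_sum]
    refine Finset.sum_congr rfl fun p _ => ?_
    rw [neg_pow]
    ring
  rw [hbinom] at hsum
  exact mul_ne_zero ha (pow_ne_zero m (sub_ne_zero.2 hr.symm)) hsum

theorem mem_ker_adjoint_iff (T : H →L[ℂ] H) (x : H) :
    x ∈ LinearMap.ker (adjoint T : H →ₗ[ℂ] H) ↔ ∀ y, ⟪x, T y⟫_ℂ = 0 := by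
  refine ⟨fun hx y => ?_, fun hx => ?_⟩
  · have hx' : adjoint T x = 0 := hx
    rw [← adjoint_inner_left, hx', inner_zero_left]
  · have := hx (adjoint T x)
    rwa [← adjoint_inner_left, inner_self_eq_zero] at this

theorem kernelCondition_iff {T : H →L[ℂ] H} {k : ℕ} :
    KernelCondition T k ↔
      ∀ n ≤ k, ∀ x, (∀ y, ⟪x, T y⟫_ℂ = 0) → ∀ y, ⟪(T ^ n) x, (T ^ (n + 1)) y⟫_ℂ = 0 := by
  simp only [KernelCondition, mem_ker_adjoint_iff, inner_opBr_left, pow_succ,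
    mul_apply_eq_comp]
  refine ⟨fun h n hn x hx => ?_, fun h n _ hn x hx => h n hn x hx⟩
  rcases Nat.eq_zero_or_pos n with rfl | hpos
  · simpa using hx
  · exact h n hpos hn x hx

theorem KernelCondition.of_intertwining {H' : Type*} [NormedAddCommGroup H']
    [InnerProductSpace ℂ H'] [CompleteSpace H'] {A : H →L[ℂ] H} {B : H' →L[ℂ] H'}
    (U : H ≃ₗᵢ[ℂ] H') (hU : ∀ f, U (A f) = B (U f)) {k : ℕ} (hB : KernelCondition B k) :
    KernelCondition A k := by
  have hpow : ∀ n f, U ((A ^ n) f) = (B ^ n) (U f) := by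
    intro n
    induction n with
    | zero => simp
    | succ n ih =>
      intro f
      rw [pow_succ, pow_succ, mul_apply_eq_comp, mul_apply_eq_comp, ih, hU]
  rw [kernelCondition_iff] at hB ⊢
  intro n hn x hx y
  have hUx : ∀ y', ⟪U x, B y'⟫_ℂ = 0 := fun y' => by
    rw [← U.apply_symm_apply y', ← hU, U.inner_map_map, hx]
  rw [← U.inner_map_map, hpow, hpow]
  exact hB n hn (U x) hUx (U y)

namespace IsWeightedShiftOf

variable {K : Type*} [NormedAddCommGroup K] [InnerProductSpace ℂ K]
  {Sh : lp (fun _ : ℕ => K) 2 →L[ℂ] lp (fun _ : ℕ => K) 2} {S : ℕ → K →L[ℂ] K}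

theorem hasSum_apply (h : IsWeightedShiftOf Sh S) (v : lp (fun _ : ℕ => K) 2) :
    HasSum (fun n => lp.single 2 (n + 1) (S n (v n))) (Sh v) := by
  convert Sh.hasSum (lp.hasSum_single ENNReal.ofNat_ne_top v) using 2 with n
  exact (h n (v n)).symm

theorem apply_zero (h : IsWeightedShiftOf Sh S) (v : lp (fun _ : ℕ => K) 2) : Sh v 0 = 0 := by
  have := (h.hasSum_apply v).mapL (lp.evalCLM ℂ (fun _ : ℕ => K) 2 0)
  simp only [lp.evalCLM, LinearMap.mkContinuous_apply, lp.evalₗ_apply,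
    lp.single_apply_ne 2 _ _ (Nat.succ_ne_zero _).symm] at this
  exact this.unique hasSum_zero

theorem apply_succ (h : IsWeightedShiftOf Sh S) (v : lp (fun _ : ℕ => K) 2) (n : ℕ) :
    Sh v (n + 1) = S n (v n) := by
  have := (h.hasSum_apply v).mapL (lp.evalCLM ℂ (fun _ : ℕ => K) 2 (n + 1))
  simp only [lp.evalCLM, LinearMap.mkContinuous_apply, lp.evalₗ_apply, lp.single_apply,
    Pi.single_apply, add_left_inj] at this
  have hsingle := hasSum_single (f := fun j => if n = j then S j (v j) else 0) n
    fun j hj => if_neg (Ne.symm hj)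
  rw [if_pos rfl] at hsingle
  exact this.unique hsingle

theorem pow_apply_of_lt (h : IsWeightedShiftOf Sh S) (v : lp (fun _ : ℕ => K) 2) {p j : ℕ}
    (hj : j < p) : (Sh ^ p) v j = 0 := by
  induction p generalizing j with
  | zero => omega
  | succ p ih =>
    rw [pow_succ', mul_apply_eq_comp]
    rcases j with _ | j
    · exact h.apply_zero _
    · rw [h.apply_succ, ih (by omega), map_zero]

theorem pow_single (h : IsWeightedShiftOf Sh S) (p n : ℕ) (k : K) :
    ∃ w, (Sh ^ p) (lp.single 2 n k) = lp.single 2 (n + p) w := by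
  induction p generalizing n k with
  | zero => exact ⟨k, by simp⟩
  | succ p ih =>
    obtain ⟨w, hw⟩ := ih (n + 1) (S n k)
    refine ⟨w, ?_⟩
    rw [pow_succ, mul_apply_eq_comp, h n k, hw, add_right_comm, add_assoc]

theorem eq_single_zero_of_inner_eq_zero (h : IsWeightedShiftOf Sh S)
    (hS : ∀ n, Function.Surjective (S n)) {v : lp (fun _ : ℕ => K) 2}
    (hv : ∀ y, ⟪v, Sh y⟫_ℂ = 0) : v = lp.single 2 0 (v 0) := by
  have hsucc : ∀ n, v (n + 1) = 0 := fun n => by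
    obtain ⟨k, hk⟩ := hS n (v (n + 1))
    rw [← inner_self_eq_zero (𝕜 := ℂ)]
    nth_rw 2 [← hk]
    rw [← lp.inner_single_right, ← h n k]
    exact hv _
  ext1
  funext n
  rcases n with _ | n
  · rw [lp.single_apply_self]
  · rw [lp.single_apply_ne 2 _ _ n.succ_ne_zero, hsucc n]

theorem kernelCondition [CompleteSpace K] (h : IsWeightedShiftOf Sh S)
    (hS : ∀ n, Function.Surjective (S n)) (k : ℕ) : KernelCondition Sh k := by
  rw [kernelCondition_iff]
  intro n _ v hv y
  obtain ⟨w, hw⟩ := h.pow_single n 0 (v 0)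
  rw [h.eq_single_zero_of_inner_eq_zero hS hv, hw, zero_add, lp.inner_single_left,
    h.pow_apply_of_lt y n.lt_succ_self, inner_zero_right]

end IsWeightedShiftOf

theorem Filter.EventuallyEq.eq_of_measure_singleton_ne_zero {X Y : Type*} [MeasurableSpace X]
    {μ : Measure X} (hμ : ∀ x, μ {x} ≠ 0) {f g : X → Y} (h : f =ᵐ[μ] g) : f = g := by
  rw [Filter.EventuallyEq, ae_eq_top.2 hμ, Filter.eventually_top] at h
  exact funext h

theorem coeFn_indicatorConstLp_of_measure_singleton_ne_zero {X E : Type*} [MeasurableSpace X]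
    [NormedAddCommGroup E] {μ : Measure X} (hμ : ∀ x, μ {x} ≠ 0) {p : ENNReal} {s : Set X}
    (hs : MeasurableSet s) (hμs : μ s ≠ ⊤) (c : E) :
    ⇑(indicatorConstLp p hs hμs c) = s.indicator fun _ => c :=
  indicatorConstLp_coeFn.eq_of_measure_singleton_ne_zero hμ

theorem Set.preimage_iterate_succ_singleton_eq_union {X : Type*} {φ : X → X} {x₀ : X}
    (hx₀ : φ x₀ = x₀) (p : ℕ) :
    φ^[p + 1] ⁻¹' {x₀} = φ^[p] ⁻¹' {x₀} ∪ φ^[p] ⁻¹' (φ ⁻¹' {x₀} \ {x₀}) := by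
  rw [← Set.preimage_union, Set.union_sdiff_cancel
    (Set.singleton_subset_iff.2 (show x₀ ∈ φ ⁻¹' {x₀} from hx₀)),
    Function.iterate_succ', Set.preimage_comp]

section CompositionOperator

variable {X : Type*} [MeasurableSpace X] {μ : Measure X}

def IsCompositionOperator (C : Lp ℂ 2 μ →L[ℂ] Lp ℂ 2 μ) (φ : X → X) : Prop :=
  ∀ f : Lp ℂ 2 μ, (C f : X → ℂ) =ᵐ[μ] fun x => f (φ x)

namespace IsCompositionOperator

variable {φ : X → X} {C : Lp ℂ 2 μ →L[ℂ] Lp ℂ 2 μ}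

theorem coeFn_pow (hC : IsCompositionOperator C φ) (hμ : ∀ x, μ {x} ≠ 0) (p : ℕ)
    (f : Lp ℂ 2 μ) : ⇑((C ^ p) f) = fun x => f (φ^[p] x) := by
  induction p generalizing f with
  | zero => rfl
  | succ p ih =>
    rw [pow_succ, mul_apply_eq_comp, ih, (hC f).eq_of_measure_singleton_ne_zero hμ]
    simp only [Function.iterate_succ_apply']

variable [MeasurableSingletonClass X] [Countable X]

theorem measure_preimage_iterate_ne_top (hC : IsCompositionOperator C φ)
    (hμ : ∀ x, μ {x} ≠ 0) {s : Set X} (hs : μ s ≠ ⊤) (p : ℕ) : μ (φ^[p] ⁻¹' s) ≠ ⊤ := by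
  have hmem := Lp.memLp ((C ^ p) (indicatorConstLp 2 .of_discrete hs (1 : ℂ)))
  rw [hC.coeFn_pow hμ, coeFn_indicatorConstLp_of_measure_singleton_ne_zero hμ] at hmem
  change MemLp ((φ^[p] ⁻¹' s).indicator fun _ => (1 : ℂ)) 2 μ at hmem
  rw [memLp_indicator_iff_restrict .of_discrete, memLp_const_iff two_ne_zero ENNReal.ofNat_ne_top]
    at hmem
  simpa [lt_top_iff_ne_top] using hmem

theorem pow_indicatorConstLp (hC : IsCompositionOperator C φ) (hμ : ∀ x, μ {x} ≠ 0)
    {s : Set X} (hs : μ s ≠ ⊤) (p : ℕ) (c : ℂ) :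
    (C ^ p) (indicatorConstLp 2 .of_discrete hs c)
      = indicatorConstLp 2 .of_discrete (hC.measure_preimage_iterate_ne_top hμ hs p) c := by
  apply Lp.ext
  rw [hC.coeFn_pow hμ, coeFn_indicatorConstLp_of_measure_singleton_ne_zero hμ,
    coeFn_indicatorConstLp_of_measure_singleton_ne_zero hμ]
  rfl

theorem inner_indicatorConstLp_one_apply_of_mapsTo (hC : IsCompositionOperator C φ)
    (hμ : ∀ x, μ {x} ≠ 0) {s : Set X} (hs : μ s ≠ ⊤) {x₀ : X} (hφ : Set.MapsTo φ s {x₀})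
    (g : Lp ℂ 2 μ) :
    ⟪indicatorConstLp 2 .of_discrete hs (1 : ℂ), C g⟫_ℂ = μ.real s * g x₀ := by
  rw [L2.inner_indicatorConstLp_one, setIntegral_congr_fun .of_discrete fun x hx => ?_,
    setIntegral_const, Complex.real_smul]
  rw [(hC g).eq_of_measure_singleton_ne_zero hμ]
  exact congrArg g (hφ hx)

theorem inner_sub_indicatorConstLp_apply_eq_zero (hC : IsCompositionOperator C φ)
    (hμ : ∀ x, μ {x} ≠ 0) {s t : Set X} (hs : μ s ≠ ⊤) (ht : μ t ≠ ⊤) {x₀ : X}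
    (hφs : Set.MapsTo φ s {x₀}) (hφt : Set.MapsTo φ t {x₀}) (g : Lp ℂ 2 μ) :
    ⟪(μ.real t : ℂ) • indicatorConstLp 2 .of_discrete hs (1 : ℂ)
      - (μ.real s : ℂ) • indicatorConstLp 2 .of_discrete ht (1 : ℂ), C g⟫_ℂ = 0 := by
  rw [inner_sub_left, inner_smul_left, inner_smul_left,
    hC.inner_indicatorConstLp_one_apply_of_mapsTo hμ hs hφs,
    hC.inner_indicatorConstLp_one_apply_of_mapsTo hμ ht hφt, Complex.conj_ofReal,
    Complex.conj_ofReal]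
  ring

theorem mul_measureReal_preimage_iterate_succ (hC : IsCompositionOperator C φ)
    (hμ : ∀ x, μ {x} ≠ 0) {x₀ : X} (hx₀ : φ x₀ = x₀) (h₀ : μ {x₀} ≠ ⊤) {k : ℕ}
    (hK : KernelCondition C k) {p : ℕ} (hp : p ≤ k) :
    μ.real {x₀} * μ.real (φ^[p + 1] ⁻¹' {x₀})
      = (μ.real {x₀} + μ.real (φ ⁻¹' {x₀} \ {x₀})) * μ.real (φ^[p] ⁻¹' {x₀}) := by
  set E := φ ⁻¹' {x₀} \ {x₀}
  have hF := hC.measure_preimage_iterate_ne_top hμ h₀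
  have hE : μ E ≠ ⊤ := measure_ne_top_of_subset Set.sdiff_subset (hF 1)
  have hEp := hC.measure_preimage_iterate_ne_top hμ hE p
  have hsplit := Set.preimage_iterate_succ_singleton_eq_union hx₀ p
  have hdisj : Disjoint (φ^[p] ⁻¹' {x₀}) (φ^[p] ⁻¹' E) := Set.disjoint_sdiff_right.preimage _
  have hkernel := hC.inner_sub_indicatorConstLp_apply_eq_zero hμ h₀ hE
    (Set.mapsTo_singleton.2 hx₀) (fun _ hx => hx.1)
  have := kernelCondition_iff.1 hK p hp _ hkernel (indicatorConstLp 2 .of_discrete h₀ (1 : ℂ))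
  rw [map_sub, map_smul, map_smul, hC.pow_indicatorConstLp hμ, hC.pow_indicatorConstLp hμ,
    hC.pow_indicatorConstLp hμ, inner_sub_left, inner_smul_left, inner_smul_left,
    L2.inner_indicatorConstLp_one_indicatorConstLp_one _ _ (hF p) (hF (p + 1)),
    L2.inner_indicatorConstLp_one_indicatorConstLp_one _ _ hEp (hF (p + 1)), hsplit,
    Set.inter_eq_left.2 Set.subset_union_left, Set.inter_eq_left.2 Set.subset_union_right,
    Complex.conj_ofReal, Complex.conj_ofReal] at this
  have hreal : μ.real E * μ.real (φ^[p] ⁻¹' {x₀}) - μ.real {x₀} * μ.real (φ^[p] ⁻¹' E) = 0 := by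
    apply Complex.ofReal_injective
    push_cast
    exact this
  rw [hsplit, measureReal_union hdisj .of_discrete (hF p) hEp]
  linear_combination -hreal

theorem not_isMIsometry_of_kernelCondition (hC : IsCompositionOperator C φ)
    (hμ : ∀ x, μ {x} ≠ 0) {x₀ y : X} (hx₀ : φ x₀ = x₀) (h₀ : μ {x₀} ≠ ⊤) (hy : φ y = x₀)
    (hyx₀ : y ≠ x₀) {m : ℕ} (hK : KernelCondition C m) : ¬ IsMIsometry C m := by
  intro hiso
  set a := μ.real {x₀}
  set c := μ.real (φ ⁻¹' {x₀} \ {x₀})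
  have ha : 0 < a := ENNReal.toReal_pos (hμ x₀) h₀
  have hc : 0 < c := by
    have hyE : {y} ⊆ φ ⁻¹' {x₀} \ {x₀} := Set.singleton_subset_iff.2 ⟨hy, hyx₀⟩
    have hE : μ (φ ⁻¹' {x₀} \ {x₀}) ≠ ⊤ :=
      measure_ne_top_of_subset Set.sdiff_subset (hC.measure_preimage_iterate_ne_top hμ h₀ 1)
    exact (ENNReal.toReal_pos (hμ y) (measure_ne_top_of_subset hyE hE)).trans_le
      (measureReal_mono hyE hE)
  have hgeom : ∀ p ≤ m, μ.real (φ^[p] ⁻¹' {x₀}) = a * ((a + c) / a) ^ p := by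
    intro p hp
    induction p with
    | zero => simp [a]
    | succ p ih =>
      have hrec : a * μ.real (φ^[p + 1] ⁻¹' {x₀}) = (a + c) * μ.real (φ^[p] ⁻¹' {x₀}) :=
        hC.mul_measureReal_preimage_iterate_succ hμ hx₀ h₀ hK (p.le_succ.trans hp)
      rw [ih (p.le_succ.trans hp)] at hrec
      apply mul_left_cancel₀ ha.ne'
      rw [hrec, pow_succ]
      field_simp
  have hnorm : ∀ p, ‖(C ^ p) (indicatorConstLp 2 .of_discrete h₀ (1 : ℂ))‖ ^ 2
      = μ.real (φ^[p] ⁻¹' {x₀}) := fun p => by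
    rw [hC.pow_indicatorConstLp hμ, norm_indicatorConstLp two_ne_zero ENNReal.ofNat_ne_top,
      norm_one, one_mul, ENNReal.toReal_ofNat, ← Real.sqrt_eq_rpow, Real.sq_sqrt measureReal_nonneg]
  refine hiso.not_forall_norm_sq_eq_geometric _ ha.ne' ?_ fun p hp => (hnorm p).trans (hgeom p hp)
  rw [ne_eq, div_eq_one_iff_eq ha.ne']
  linarith

end IsCompositionOperator

end CompositionOperator

theorem compositionOperator_oneCircuit_not_unitarily_equivalent_shift_general
    {X : Type*} [MeasurableSpace X] [MeasurableSingletonClass X] [Countable X]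
    {ι : Type*} [Nonempty ι]
    (x₁ : X) (e : ι → ℕ → X)
    (hx₁ : ∀ i j, e i j ≠ x₁)
    (φ : X → X)
    (hφ₁ : φ x₁ = x₁) (hφ₂ : ∀ i, φ (e i 0) = x₁)
    (μ : Measure X) (hμ : ∀ x : X, 0 < μ {x} ∧ μ {x} < ⊤)
    (C : Lp ℂ 2 μ →L[ℂ] Lp ℂ 2 μ)
    (hC : ∀ f : Lp ℂ 2 μ, (C f : X → ℂ) =ᵐ[μ] fun x => f (φ x))
    (m : ℕ) (hiso : IsMIsometry C m) :
    ∀ (K : Type*) [NormedAddCommGroup K] [InnerProductSpace ℂ K] [CompleteSpace K]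
      (S : ℕ → K →L[ℂ] K)
      (Sh : lp (fun _ : ℕ => K) 2 →L[ℂ] lp (fun _ : ℕ => K) 2)
      (U : Lp ℂ 2 μ ≃ₗᵢ[ℂ] lp (fun _ : ℕ => K) 2),
      (∃ M : ℝ, ∀ n, ‖S n‖ ≤ M) → (∀ n, IsUnit (S n)) →
      IsWeightedShiftOf Sh S →
      ¬ (∀ f : Lp ℂ 2 μ, U (C f) = Sh (U f)) := by
  intro K _ _ _ S Sh U _ hS hshift hU
  have hK : KernelCondition C m :=
    (hshift.kernelCondition (fun n => (isUnit_iff_bijective.1 (hS n)).2) m).of_intertwining U hU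
  obtain ⟨i⟩ := ‹Nonempty ι›
  exact IsCompositionOperator.not_isMIsometry_of_kernelCondition hC (fun x => (hμ x).1.ne') hφ₁
    (hμ x₁).2.ne (hφ₂ i) (hx₁ i 0) hK hiso

/-- Corollary 4.5. Let `C_φ` be a bounded `m`-isometric (`m ≥ 2`) composition
operator on `L²(μ)` over a directed graph with one circuit containing exactly one element
(`κ = 1`): here `X = {x₁} ∪ {x_{i,j} : 1 ≤ i ≤ η, j ∈ ℕ}` where `e i j` encodes `x_{i,j+1}`,
`φ(x₁) = x₁`, `φ(x_{i,1}) = x₁` and `φ(x_{i,j+1}) = x_{i,j}`. Then `C_φ` is not unitarily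
equivalent to any unilateral operator valued weighted shift. -/
theorem compositionOperator_oneCircuit_not_unitarily_equivalent_shift
    {X : Type*} [MeasurableSpace X] [MeasurableSingletonClass X] [Countable X]
    {ι : Type*} [Nonempty ι] [Countable ι]
    (x₁ : X) (e : ι → ℕ → X)
    (hinj : Function.Injective fun p : ι × ℕ => e p.1 p.2)
    (hx₁ : ∀ i j, e i j ≠ x₁)
    (hcover : ∀ x : X, x = x₁ ∨ ∃ i j, x = e i j)
    (φ : X → X)
    (hφ₁ : φ x₁ = x₁) (hφ₂ : ∀ i, φ (e i 0) = x₁) (hφ₃ : ∀ i j, φ (e i (j + 1)) = e i j)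
    (μ : Measure X) (hμ : ∀ x : X, 0 < μ {x} ∧ μ {x} < ⊤)
    (C : Lp ℂ 2 μ →L[ℂ] Lp ℂ 2 μ)
    (hC : ∀ f : Lp ℂ 2 μ, (C f : X → ℂ) =ᵐ[μ] fun x => f (φ x))
    (m : ℕ) (hm : 2 ≤ m) (hiso : IsMIsometry C m) :
    ∀ (K : Type*) [NormedAddCommGroup K] [InnerProductSpace ℂ K] [CompleteSpace K]
      (S : ℕ → K →L[ℂ] K)
      (Sh : lp (fun _ : ℕ => K) 2 →L[ℂ] lp (fun _ : ℕ => K) 2)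
      (U : Lp ℂ 2 μ ≃ₗᵢ[ℂ] lp (fun _ : ℕ => K) 2),
      (∃ M : ℝ, ∀ n, ‖S n‖ ≤ M) → (∀ n, IsUnit (S n)) →
      IsWeightedShiftOf Sh S →
      ¬ (∀ f : Lp ℂ 2 μ, U (C f) = Sh (U f)) :=
  compositionOperator_oneCircuit_not_unitarily_equivalent_shift_general x₁ e hx₁ φ hφ₁ hφ₂ μ hμ C hC
    m hiso
end
end
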